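/- If two selection matrices Q₁ and Q₂ select disjoint index sets and the matrix A satisfies Q₁ A Q₂ᵀ = 0 (no coupling between the two index sets), then the corresponding local solver updates commute: applying the update for patch 1 and then patch 2 gives the same result as the reverse order. -/

import Mathlib

open Matrix

/-!
Write the update for a restriction `P` as `x ↦ x - Pᵀ M P (A x - b)`. The correction made by
patch 1 lies in the range of `Q₁ᵀ`, and `Q₂ A Q₁ᵀ = (Q₁ A Q₂ᵀ)ᵀ = 0` by symmetry of `A`, so it
does not change the residual seen by patch 2, and vice versa. Each update therefore subtracts
the same correction in either order, and the two orders agree.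
-/

variable {R m n k : Type*} [CommRing R] [Fintype n]

namespace Matrix

lemma mul_mul_transpose_eq_zero_comm {A : Matrix n n R} (hA : A.IsSymm)
    {P₁ : Matrix m n R} {P₂ : Matrix k n R} (h : P₁ * A * P₂ᵀ = 0) : P₂ * A * P₁ᵀ = 0 := by
  simpa [transpose_mul, hA.eq, Matrix.mul_assoc] using congrArg transpose h

/-- The local solver on the patch selected by `P`, with `M` in place of `(P A Pᵀ)⁻¹`. -/
def subspaceCorrection [Fintype m] (A : Matrix n n R) (b : n → R) (P : Matrix m n R)
    (M : Matrix m m R) (x : n → R) : n → R :=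
  x - Pᵀ *ᵥ (M *ᵥ (P *ᵥ (A *ᵥ x - b)))

variable {A : Matrix n n R} {b : n → R}

lemma mulVec_residual_subspaceCorrection [Fintype m] {P₁ : Matrix m n R} {P₂ : Matrix k n R}
    (h : P₂ * A * P₁ᵀ = 0) (M : Matrix m m R) (x : n → R) :
    P₂ *ᵥ (A *ᵥ subspaceCorrection A b P₁ M x - b) = P₂ *ᵥ (A *ᵥ x - b) := by
  have hzero : ∀ w, P₂ *ᵥ (A *ᵥ (P₁ᵀ *ᵥ w)) = 0 := fun w => by
    rw [mulVec_mulVec, mulVec_mulVec, h, zero_mulVec]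
  simp only [subspaceCorrection, mulVec_sub, hzero, sub_zero]

lemma subspaceCorrection_comm [Fintype m] [Fintype k] {P₁ : Matrix m n R} {P₂ : Matrix k n R}
    (h₁₂ : P₁ * A * P₂ᵀ = 0) (h₂₁ : P₂ * A * P₁ᵀ = 0)
    (M₁ : Matrix m m R) (M₂ : Matrix k k R) (x : n → R) :
    subspaceCorrection A b P₂ M₂ (subspaceCorrection A b P₁ M₁ x) =
      subspaceCorrection A b P₁ M₁ (subspaceCorrection A b P₂ M₂ x) := by
  conv_lhs => rw [subspaceCorrection, mulVec_residual_subspaceCorrection h₂₁]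
  conv_rhs => rw [subspaceCorrection, mulVec_residual_subspaceCorrection h₁₂]
  simp only [subspaceCorrection]
  abel

end Matrix

theorem local_solvers_commute_general {n k₁ k₂ : ℕ}
    (A : Matrix (Fin n) (Fin n) ℝ) (hA : A.PosDef) (b : Fin n → ℝ)
    (Q₁ : Matrix (Fin k₁) (Fin n) ℝ)
    (Q₂ : Matrix (Fin k₂) (Fin n) ℝ)
    (hcoupling : Q₁ * A * Q₂ᵀ = 0)
    (S₁ S₂ : (Fin n → ℝ) → (Fin n → ℝ))
    (hS₁ : ∀ x, S₁ x = x - Q₁ᵀ *ᵥ ((Q₁ * A * Q₁ᵀ)⁻¹ *ᵥ (Q₁ *ᵥ (A *ᵥ x - b))))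
    (hS₂ : ∀ x, S₂ x = x - Q₂ᵀ *ᵥ ((Q₂ * A * Q₂ᵀ)⁻¹ *ᵥ (Q₂ *ᵥ (A *ᵥ x - b)))) :
    ∀ x, S₂ (S₁ x) = S₁ (S₂ x) := by
  have hsymm : A.IsSymm := isHermitian_iff_isSymm.mp hA.isHermitian
  obtain rfl : S₁ = subspaceCorrection A b Q₁ (Q₁ * A * Q₁ᵀ)⁻¹ := funext hS₁
  obtain rfl : S₂ = subspaceCorrection A b Q₂ (Q₂ * A * Q₂ᵀ)⁻¹ := funext hS₂
  exact subspaceCorrection_comm hcoupling (mul_mul_transpose_eq_zero_comm hsymm hcoupling) _ _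

/-- If two selection matrices select disjoint index sets and `Q₁ A Q₂ᵀ = 0`, then the
corresponding local solver updates commute. -/
theorem local_solvers_commute {n k₁ k₂ : ℕ}
    (A : Matrix (Fin n) (Fin n) ℝ) (hA : A.PosDef) (b : Fin n → ℝ)
    (σ₁ : Fin k₁ → Fin n) (hσ₁ : Function.Injective σ₁)
    (σ₂ : Fin k₂ → Fin n) (hσ₂ : Function.Injective σ₂)
    (hdisj : ∀ i j, σ₁ i ≠ σ₂ j)
    (Q₁ : Matrix (Fin k₁) (Fin n) ℝ) (hQ₁ : ∀ i j, Q₁ i j = if j = σ₁ i then 1 else 0)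
    (Q₂ : Matrix (Fin k₂) (Fin n) ℝ) (hQ₂ : ∀ i j, Q₂ i j = if j = σ₂ i then 1 else 0)
    (hcoupling : Q₁ * A * Q₂ᵀ = 0)
    (S₁ S₂ : (Fin n → ℝ) → (Fin n → ℝ))
    (hS₁ : ∀ x, S₁ x = x - Q₁ᵀ *ᵥ ((Q₁ * A * Q₁ᵀ)⁻¹ *ᵥ (Q₁ *ᵥ (A *ᵥ x - b))))
    (hS₂ : ∀ x, S₂ x = x - Q₂ᵀ *ᵥ ((Q₂ * A * Q₂ᵀ)⁻¹ *ᵥ (Q₂ *ᵥ (A *ᵥ x - b)))) :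
    ∀ x, S₂ (S₁ x) = S₁ (S₂ x) :=
  local_solvers_commute_general A hA b Q₁ Q₂ hcoupling S₁ S₂ hS₁ hS₂
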